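/- Let A and B be two independent sets of the same size in a finite simple graph G. If the Piran graph Π(A,B) is even-hole-free, then A and B are TJ-reconfigurable, and the minimum length of a TJ-reconfiguration sequence from A to B is exactly |A \ B|. -/

import Mathlib

variable {V : Type*} [DecidableEq V]

/-- `A` is an independent set of the graph `G`. -/
def IsIndep (G : SimpleGraph V) (A : Finset V) : Prop :=
  ∀ u ∈ A, ∀ v ∈ A, ¬G.Adj u v

/-- A graph is even-hole-free if it contains no induced cycle with an even number of
vertices (a hole has at least 4 vertices). -/
def EvenHoleFree {W : Type*} (H : SimpleGraph W) : Prop :=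
  ∀ n : ℕ, 4 ≤ n → n % 2 = 0 → IsEmpty (SimpleGraph.cycleGraph n ↪g H)

/-- The Piran graph `Π(A,B)` of two independent sets `A`, `B` of `G`: the subgraph of `G`
induced by `(A \ B) ∪ (B \ A)`. -/
def Piran (G : SimpleGraph V) (A B : Finset V) :
    SimpleGraph ((↑A \ ↑B ∪ (↑B \ ↑A) : Set V)) :=
  G.induce (↑A \ ↑B ∪ (↑B \ ↑A) : Set V)

/-- Two independent sets are TJ-adjacent (differ by one token jump). -/
def TJAdj (A B : Finset V) : Prop :=
  A.card = B.card ∧ (A \ B).card = 1 ∧ (B \ A).card = 1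

/-- There is a TJ-reconfiguration sequence of length `ℓ` from `A` to `B` in `G`. -/
def TJSeq (G : SimpleGraph V) (A B : Finset V) (ℓ : ℕ) : Prop :=
  ∃ ρ : ℕ → Finset V, ρ 0 = A ∧ ρ ℓ = B ∧ (∀ i ≤ ℓ, IsIndep G (ρ i)) ∧
    ∀ i < ℓ, TJAdj (ρ i) (ρ (i + 1))

/-!
The Piran graph `Π(A, B)` is bipartite with sides `A \ B` and `B \ A` of equal size. A shortest
cycle of a graph is an induced cycle, and in a bipartite graph it has even length, so an
even-hole-free bipartite graph is a forest. A forest has fewer edges than vertices, hence some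
`y ∈ B \ A` has at most one neighbour `x` in `A \ B` (if it has none, `x` is arbitrary). Jumping the
token from `x` to `y` keeps the set independent, removes `x` and `y` from the Piran graph, and
shrinks `|A \ B|` by one; induction yields a sequence of length `|A \ B|`. Conversely, a single
jump lowers `|A \ B|` by at most one.
-/

open scoped Finset

namespace SimpleGraph

lemma cycleGraph_adj_iff_val {n : ℕ} (hn : 1 < n) {a b : Fin n} :
    (cycleGraph n).Adj a b ↔ a.val + 1 = b.val ∨ b.val + 1 = a.val ∨
      a.val = 0 ∧ b.val + 1 = n ∨ b.val = 0 ∧ a.val + 1 = n := by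
  rw [cycleGraph_adj']
  have := a.isLt
  have := b.isLt
  rcases lt_or_ge a b with h | h
  · rw [Fin.coe_sub_iff_lt.mpr h, Fin.coe_sub_iff_le.mpr h.le]
    have : (a : ℕ) < b := h
    omega
  · rw [Fin.coe_sub_iff_le.mpr h]
    rcases h.lt_or_eq with h | rfl
    · rw [Fin.coe_sub_iff_lt.mpr h]
      have : (b : ℕ) < a := h
      omega
    · rw [Fin.coe_sub_iff_le.mpr le_rfl]
      omega

variable {W : Type*} {H : SimpleGraph W}

/-- The chord `f i f j` closes the arc `f i, f (i + 1), …, f j` into a shorter cycle. -/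
lemma Copy.cycleGraph_isContained_of_adj {n : ℕ} (f : Copy (cycleGraph n) H) {i j : Fin n}
    (hij : i.val + 2 ≤ j.val) (hadj : H.Adj (f i) (f j)) :
    cycleGraph (j.val - i.val + 1) ⊑ H := by
  have hj := j.isLt
  let g : Fin (j.val - i.val + 1) → Fin n := fun k => ⟨i.val + k.val, by omega⟩
  have hstep : ∀ k k', k.val + 1 = k'.val → H.Adj (f (g k)) (f (g k')) := fun k k' h =>
    f.toHom.map_adj <| (cycleGraph_adj_iff_val (by omega)).mpr <| Or.inl <| by
      simp only [g]
      omega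
  have hwrap : ∀ k k' : Fin (j.val - i.val + 1), k.val = 0 → k'.val + 1 = j.val - i.val + 1 →
      H.Adj (f (g k)) (f (g k')) := fun k k' h0 h1 => by
    convert hadj using 2 <;> refine Fin.ext ?_ <;> dsimp only [g] <;> omega
  refine ⟨⟨⟨f ∘ g, fun {k k'} hkk' => ?_⟩, f.injective.comp fun k k' h => ?_⟩⟩
  · rcases (cycleGraph_adj_iff_val (by omega)).mp hkk' with h | h | ⟨h0, h1⟩ | ⟨h0, h1⟩
    · exact hstep k k' h
    · exact (hstep k' k h).symm
    · exact hwrap k k' h0 h1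
    · exact (hwrap k' k h0 h1).symm
  · ext
    simpa only [g, Fin.mk.injEq, Nat.add_left_cancel_iff] using h

lemma cycleGraph_girth_isIndContained (h : ¬H.IsAcyclic) : cycleGraph H.girth ⊴ H := by
  have h3 : 3 ≤ H.girth := three_le_girth h
  obtain ⟨a, w, hw, hlen⟩ := exists_girth_eq_length.mpr h
  obtain ⟨f⟩ := (cycleGraph_isContained_iff h3).mpr ⟨a, w, hw, hlen.symm⟩
  have chordless : ∀ i j : Fin H.girth, i < j → H.Adj (f i) (f j) → (cycleGraph _).Adj i j := by
    intro i j hij hadj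
    have hj := j.isLt
    have hij : i.val < j.val := hij
    by_contra hnot
    rw [cycleGraph_adj_iff_val (by omega)] at hnot
    obtain ⟨v, p, hp, hplen⟩ :=
      (cycleGraph_isContained_iff (by omega)).mp (f.cycleGraph_isContained_of_adj (by omega) hadj)
    have := girth_le_length hp
    omega
  refine ⟨{ toFun := f, inj' := f.injective,
            map_rel_iff' := fun {i j} => ⟨fun hadj => ?_, f.toHom.map_adj⟩ }⟩
  rcases lt_trichotomy i j with hij | rfl | hij
  · exact chordless i j hij hadj
  · exact absurd hadj H.irrefl
  · exact (chordless j i hij hadj.symm).symm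

lemma IsAcyclic.card_edgeFinset_lt [Fintype W] [Nonempty W] [Fintype H.edgeSet]
    (hH : H.IsAcyclic) : #H.edgeFinset < Fintype.card W := by
  classical
  obtain ⟨T, hHT, -, hT⟩ := connected_top.exists_isTree_le_of_le_of_isAcyclic le_top hH
  calc #H.edgeFinset ≤ #T.edgeFinset := Finset.card_le_card (edgeFinset_mono hHT)
    _ < Fintype.card W := by have := hT.card_edgeFinset; omega

lemma IsBipartiteWith.exists_degree_le_one_of_isAcyclic [Fintype W] [DecidableEq W]
    [DecidableRel H.Adj] {s t : Finset W} (hst : H.IsBipartiteWith s t)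
    (hcover : s ∪ t = Finset.univ) (hcard : #s ≤ #t) (ht : t.Nonempty) (hH : H.IsAcyclic) :
    ∃ w ∈ t, H.degree w ≤ 1 := by
  by_contra! hdeg
  have : Nonempty W := ⟨ht.choose⟩
  have := calc 2 * #t = ∑ _w ∈ t, 2 := by simp [mul_comm]
    _ ≤ ∑ w ∈ t, H.degree w := Finset.sum_le_sum hdeg
    _ = #H.edgeFinset := isBipartiteWith_sum_degrees_eq_card_edges' hst
    _ < Fintype.card W := hH.card_edgeFinset_lt
    _ = #(s ∪ t) := by rw [hcover, Finset.card_univ]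
    _ ≤ #s + #t := Finset.card_union_le s t
  omega

end SimpleGraph

open SimpleGraph

section EvenHoleFree

variable {W W' : Type*} {H : SimpleGraph W} {H' : SimpleGraph W'}

lemma EvenHoleFree.of_embedding (f : H' ↪g H) (hH : EvenHoleFree H) : EvenHoleFree H' :=
  fun n hn heven => ⟨fun e => (hH n hn heven).false (f.comp e)⟩

lemma EvenHoleFree.isAcyclic (hH : EvenHoleFree H) (hbip : H.IsBipartite) : H.IsAcyclic := by
  by_contra hcyc
  obtain ⟨e⟩ := cycleGraph_girth_isIndContained hcyc
  have h3 := three_le_girth hcyc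
  have heven : H.girth % 2 = 0 := by
    by_contra hodd
    have h2 := (hbip.of_hom e.toHom).chromaticNumber_le
    rw [chromaticNumber_cycleGraph_of_odd _ (by omega) (Nat.odd_iff.mpr (by omega))] at h2
    exact absurd h2 (by decide)
  exact (hH H.girth (by omega) heven).false e

end EvenHoleFree

section Reconfiguration

variable {G : SimpleGraph V} {A A' B : Finset V} {ℓ : ℕ}

lemma TJAdj.card_sdiff_le (h : TJAdj A A') : #(A \ B) ≤ #(A' \ B) + 1 := by
  have hsub : A \ B ⊆ (A' \ B) ∪ (A \ A') := by
    intro a ha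
    simp only [Finset.mem_union, Finset.mem_sdiff] at ha ⊢
    tauto
  calc #(A \ B) ≤ #((A' \ B) ∪ (A \ A')) := Finset.card_le_card hsub
    _ ≤ #(A' \ B) + #(A \ A') := Finset.card_union_le _ _
    _ = #(A' \ B) + 1 := by rw [h.2.1]

lemma tjAdj_insert_erase {x y : V} (hx : x ∈ A) (hy : y ∉ A) :
    TJAdj A (insert y (A.erase x)) := by
  have hxy : x ≠ y := by rintro rfl; exact hy hx
  refine ⟨?_, Finset.card_eq_one.mpr ⟨x, ?_⟩, Finset.card_eq_one.mpr ⟨y, ?_⟩⟩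
  · rw [Finset.card_insert_of_notMem (fun h => hy (Finset.mem_of_mem_erase h)),
      Finset.card_erase_add_one hx]
  all_goals
    ext a
    simp only [Finset.mem_sdiff, Finset.mem_insert, Finset.mem_erase, Finset.mem_singleton]
    grind

lemma insert_erase_sdiff {x y : V} (hx : x ∉ B) (hy : y ∈ B) :
    insert y (A.erase x) \ B = (A \ B).erase x := by
  ext a
  simp only [Finset.mem_sdiff, Finset.mem_insert, Finset.mem_erase]
  grind

lemma sdiff_insert_erase_subset {x y : V} (hx : x ∉ B) : B \ insert y (A.erase x) ⊆ B \ A := by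
  intro a
  simp only [Finset.mem_sdiff, Finset.mem_insert, Finset.mem_erase]
  grind

lemma IsIndep.insert_erase (hA : IsIndep G A) (hB : IsIndep G B) {x y : V} (hy : y ∈ B)
    (hxy : ∀ a ∈ A \ B, G.Adj a y → a = x) : IsIndep G (insert y (A.erase x)) := by
  have hyA : ∀ a ∈ A.erase x, ¬G.Adj a y := fun a ha hay => by
    rw [Finset.mem_erase] at ha
    by_cases haB : a ∈ B
    · exact hB a haB y hy hay
    · exact ha.1 (hxy a (Finset.mem_sdiff.mpr ⟨ha.2, haB⟩) hay)
  intro u hu v hv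
  rw [Finset.mem_insert] at hu hv
  rcases hu with rfl | hu <;> rcases hv with rfl | hv
  · exact G.irrefl
  · exact fun h => hyA v hv h.symm
  · exact hyA u hu
  · exact hA u (Finset.mem_of_mem_erase hu) v (Finset.mem_of_mem_erase hv)

lemma IsIndep.tjSeq_refl (hA : IsIndep G A) : TJSeq G A A 0 :=
  ⟨fun _ => A, rfl, rfl, fun _ _ => hA, fun _ h => absurd h (Nat.not_lt_zero _)⟩

lemma IsIndep.tjSeq_cons (hA : IsIndep G A) (hAA' : TJAdj A A') (h : TJSeq G A' B ℓ) :
    TJSeq G A B (ℓ + 1) := by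
  obtain ⟨ρ, h0, hB, hindep, hadj⟩ := h
  refine ⟨fun | 0 => A | i + 1 => ρ i, rfl, hB, fun i hi => ?_, fun i hi => ?_⟩
  · cases i with
    | zero => exact hA
    | succ i => exact hindep i (by omega)
  · cases i with
    | zero => show TJAdj A (ρ 0); rwa [h0]
    | succ i => exact hadj i (by omega)

lemma TJSeq.eq_of_zero (h : TJSeq G A B 0) : A = B := by
  obtain ⟨ρ, h0, hB, -⟩ := h
  exact h0.symm.trans hB

lemma TJSeq.tail (h : TJSeq G A B (ℓ + 1)) : ∃ A', TJAdj A A' ∧ TJSeq G A' B ℓ := by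
  obtain ⟨ρ, h0, hB, hindep, hadj⟩ := h
  exact ⟨ρ 1, h0 ▸ hadj 0 (by omega), fun i => ρ (i + 1), rfl, hB,
    fun i hi => hindep (i + 1) (by omega), fun i hi => hadj (i + 1) (by omega)⟩

lemma TJSeq.card_sdiff_le (h : TJSeq G A B ℓ) : #(A \ B) ≤ ℓ := by
  induction ℓ generalizing A with
  | zero => simp [h.eq_of_zero]
  | succ ℓ ih =>
    obtain ⟨A', hAA', h'⟩ := h.tail
    exact hAA'.card_sdiff_le.trans (by have := ih h'; omega)

end Reconfiguration

section Piran

variable {G : SimpleGraph V} {A A' B : Finset V}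

lemma piran_isBipartiteWith (hA : IsIndep G A) (hB : IsIndep G B) :
    (Piran G A B).IsBipartiteWith {v | v.1 ∈ A \ B} {v | v.1 ∈ B \ A} where
  disjoint := Set.disjoint_left.mpr fun v hv hv' => by
    simp only [Set.mem_ofPred_eq, Finset.mem_sdiff] at hv hv'
    exact hv.2 hv'.1
  mem_of_adj v w hvw := by
    have hv := v.2
    have hw := w.2
    simp only [Set.mem_union, Set.mem_sdiff, Finset.mem_coe] at hv hw
    simp only [Set.mem_ofPred_eq, Finset.mem_sdiff]
    rcases hv with hv | hv <;> rcases hw with hw | hw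
    · exact absurd hvw (hA _ hv.1 _ hw.1)
    · exact Or.inl ⟨hv, hw⟩
    · exact Or.inr ⟨hv, hw⟩
    · exact absurd hvw (hB _ hv.1 _ hw.1)

lemma EvenHoleFree.piran_of_subset (hA' : A' \ B ⊆ A \ B) (hB' : B \ A' ⊆ B \ A)
    (h : EvenHoleFree (Piran G A B)) : EvenHoleFree (Piran G A' B) :=
  h.of_embedding <| G.induceHomOfLE <| by
    simpa only [← Finset.coe_sdiff] using
      Set.union_subset_union (Finset.coe_subset.mpr hA') (Finset.coe_subset.mpr hB')

lemma exists_mem_sdiff_piran_neighborSet_subsingleton (hA : IsIndep G A) (hB : IsIndep G B)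
    (hcard : #A = #B) (hne : (A \ B).Nonempty) (hehf : EvenHoleFree (Piran G A B)) :
    ∃ y : (↑A \ ↑B ∪ (↑B \ ↑A) : Set V),
      y.1 ∈ B \ A ∧ ((Piran G A B).neighborSet y).Subsingleton := by
  classical
  set S : Set V := ↑A \ ↑B ∪ (↑B \ ↑A)
  set s := (A \ B).subtype (· ∈ S)
  set t := (B \ A).subtype (· ∈ S)
  have hst : (Piran G A B).IsBipartiteWith ↑s ↑t := by
    convert piran_isBipartiteWith hA hB using 1 <;> ext v <;>
      simp only [SetLike.mem_coe, Finset.mem_subtype, Finset.mem_sdiff, Set.mem_ofPred_eq, s, t]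
  have hcover : s ∪ t = Finset.univ := by
    ext v
    have := v.2
    simp only [S, Set.mem_union, Set.mem_sdiff, Finset.mem_coe] at this
    simp only [Finset.mem_union, Finset.mem_subtype, Finset.mem_sdiff, Finset.mem_univ,
      iff_true, s, t]
    tauto
  have hcard_s : #s = #(A \ B) := by
    rw [Finset.card_subtype, Finset.filter_true_of_mem]
    intro v hv
    simp_all [S]
  have hcard_t : #t = #(B \ A) := by
    rw [Finset.card_subtype, Finset.filter_true_of_mem]
    intro v hv
    simp_all [S]
  have hcard_sdiff := Finset.card_sdiff_comm hcard
  obtain ⟨y, hyt, hdeg⟩ := hst.exists_degree_le_one_of_isAcyclic hcover (by omega)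
    (Finset.card_pos.mp (by have := hne.card_pos; omega)) (hehf.isAcyclic hst.isBipartite)
  refine ⟨y, by simpa [t] using hyt, fun a ha b hb => ?_⟩
  rw [← card_neighborFinset_eq_degree] at hdeg
  exact Finset.card_le_one.mp hdeg a ((mem_neighborFinset _ _ _).mpr ha)
    b ((mem_neighborFinset _ _ _).mpr hb)

lemma exists_token_jump (hA : IsIndep G A) (hB : IsIndep G B) (hcard : #A = #B)
    (hne : (A \ B).Nonempty) (hehf : EvenHoleFree (Piran G A B)) :
    ∃ x ∈ A \ B, ∃ y ∈ B \ A, ∀ a ∈ A \ B, G.Adj a y → a = x := by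
  obtain ⟨y, hyBA, hy⟩ := exists_mem_sdiff_piran_neighborSet_subsingleton hA hB hcard hne hehf
  have hmem : ∀ a ∈ A \ B, a ∈ (↑A \ ↑B ∪ (↑B \ ↑A) : Set V) := fun a ha =>
    Or.inl (Finset.coe_sdiff A B ▸ ha)
  by_cases hadj : ∃ x ∈ A \ B, G.Adj x y
  · obtain ⟨x, hx, hxy⟩ := hadj
    refine ⟨x, hx, y, hyBA, fun a ha hay => ?_⟩
    exact congrArg Subtype.val (@hy ⟨a, hmem a ha⟩ hay.symm ⟨x, hmem x hx⟩ hxy.symm)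
  · push Not at hadj
    obtain ⟨x, hx⟩ := hne
    exact ⟨x, hx, y, hyBA, fun a ha hay => absurd hay (hadj a ha)⟩

lemma tjSeq_card_sdiff_of_evenHoleFree (hA : IsIndep G A) (hB : IsIndep G B) (hcard : #A = #B)
    (hehf : EvenHoleFree (Piran G A B)) : TJSeq G A B #(A \ B) := by
  obtain ⟨k, hk⟩ : ∃ k, #(A \ B) = k := ⟨_, rfl⟩
  rw [hk]
  induction k generalizing A with
  | zero =>
    have hAB : A ⊆ B := Finset.sdiff_eq_empty_iff_subset.mp (Finset.card_eq_zero.mp hk)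
    exact Finset.eq_of_subset_of_card_le hAB hcard.ge ▸ hA.tjSeq_refl
  | succ k ih =>
    obtain ⟨x, hx, y, hy, hxy⟩ :=
      exists_token_jump hA hB hcard (Finset.card_pos.mp (by omega)) hehf
    rw [Finset.mem_sdiff] at hx hy
    have hjump := tjAdj_insert_erase hx.1 hy.2
    have hA'B := insert_erase_sdiff (A := A) hx.2 hy.1
    have hehf' := hehf.piran_of_subset (hA'B ▸ Finset.erase_subset _ _)
      (sdiff_insert_erase_subset hx.2)
    refine hA.tjSeq_cons hjump
      (ih (hA.insert_erase hB hy.1 hxy) (hjump.1.symm.trans hcard) hehf' ?_)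
    rw [hA'B, Finset.card_erase_of_mem (Finset.mem_sdiff.mpr hx), hk, Nat.add_sub_cancel]

end Piran

theorem stmt15_general {V : Type*} [DecidableEq V] (G : SimpleGraph V)
    (A B : Finset V) (hA : IsIndep G A) (hB : IsIndep G B)
    (hcard : A.card = B.card)
    (hehf : EvenHoleFree (Piran G A B)) :
    (∃ ℓ, TJSeq G A B ℓ) ∧ IsLeast {ℓ | TJSeq G A B ℓ} ((A \ B).card) := by
  have hseq := tjSeq_card_sdiff_of_evenHoleFree hA hB hcard hehf
  exact ⟨⟨_, hseq⟩, hseq, fun ℓ hℓ => hℓ.card_sdiff_le⟩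

/-- if `A` and `B` are independent sets of the same size in `G` whose Piran
graph is even-hole-free, then `A` and `B` are TJ-reconfigurable and the minimum length of
a TJ-reconfiguration sequence from `A` to `B` is exactly `|A \ B|`. -/
theorem stmt15 {V : Type*} [DecidableEq V] [Fintype V] (G : SimpleGraph V)
    (A B : Finset V) (hA : IsIndep G A) (hB : IsIndep G B)
    (hcard : A.card = B.card)
    (hehf : EvenHoleFree (Piran G A B)) :
    (∃ ℓ, TJSeq G A B ℓ) ∧ IsLeast {ℓ | TJSeq G A B ℓ} ((A \ B).card) :=
  stmt15_general G A B hA hB hcard hehf
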